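/- The GAN value function V(D) = E_{x∼p_data}[log D(x)] + E_{x∼p_G}[log(1−D(x))], for fixed pmfs p_data and p_G on a finite set, is maximized over functions D : X → (0,1) by D(x) = p_data(x)/(p_data(x)+p_G(x)), and the maximal value equals −log 4 + 2·JSD(p_data‖p_G), where JSD is the Jensen–Shannon divergence. -/

import Mathlib

/-!
For each `x` the integrand `a log d + b log (1 - d)`, with `a = p_data x`, `b = p_G x`, is
maximized at `d = a / (a + b)`: this is Gibbs' inequality for two-point distributions, which
follows from `log t ≤ t - 1`. Summing over `x` gives the optimality of `D*`. For the value,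
halving the denominator `a + b` shifts each term by `a log 2` (resp. `b log 2`); since both
distributions have total mass one, the shifts add up to `2 log 2 = log 4`.
-/

open Real Finset

lemma mul_log_le_mul_log_div_add_sub {p c d : ℝ} (hp : 0 ≤ p) (hc : 0 < c) (hd : 0 < d) :
    p * log d ≤ p * log (p / c) + (c * d - p) := by
  rcases hp.eq_or_lt with rfl | hp
  · simpa using (mul_pos hc hd).le
  have key := log_le_sub_one_of_pos (show 0 < c * d / p by positivity)
  rw [log_div (by positivity) hp.ne', log_mul hc.ne' hd.ne'] at key
  have hscaled := mul_le_mul_of_nonneg_left key hp.le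
  rw [mul_sub, mul_add, mul_sub, mul_div_cancel₀ _ hp.ne', mul_one] at hscaled
  rw [log_div hp.ne' hc.ne']
  linarith

lemma mul_log_add_mul_log_one_sub_le {a b d : ℝ} (ha : 0 ≤ a) (hb : 0 ≤ b) (hab : 0 < a + b)
    (hd₀ : 0 < d) (hd₁ : d < 1) :
    a * log d + b * log (1 - d) ≤ a * log (a / (a + b)) + b * log (b / (a + b)) := by
  have hd := mul_log_le_mul_log_div_add_sub ha hab hd₀
  have hd' := mul_log_le_mul_log_div_add_sub hb hab (sub_pos.2 hd₁)
  have hslack : ((a + b) * d - a) + ((a + b) * (1 - d) - b) = 0 := by ring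
  linarith

lemma mul_log_div_half_eq (p : ℝ) {s : ℝ} (hs : s ≠ 0) :
    p * log (p / (s / 2)) = p * log (p / s) + p * log 2 := by
  rcases eq_or_ne p 0 with rfl | hp
  · simp
  rw [div_div_eq_mul_div, mul_div_right_comm, log_mul (div_ne_zero hp hs) two_ne_zero, mul_add]

lemma sum_mul_log_div_half_eq {ι : Type*} (t : Finset ι) (p s : ι → ℝ)
    (hs : ∀ i ∈ t, s i ≠ 0) :
    ∑ i ∈ t, p i * log (p i / (s i / 2)) =
      ∑ i ∈ t, p i * log (p i / s i) + (∑ i ∈ t, p i) * log 2 := by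
  rw [sum_mul, ← sum_add_distrib]
  exact sum_congr rfl fun i hi => mul_log_div_half_eq (p i) (hs i hi)

lemma log_four : log 4 = 2 * log 2 := by
  rw [show (4 : ℝ) = 2 ^ 2 by norm_num, log_pow, Nat.cast_ofNat]

/-- The GAN value function `V(D) = E_{p_data}[log D] + E_{p_G}[log (1-D)]` over discriminators
`D : X → (0,1)` is maximized by `D*(x) = p_data x / (p_data x + p_G x)`, and the maximum value
is `-log 4 + 2 JSD(p_data‖p_G)`, where `JSD` is the Jensen–Shannon divergence. -/
theorem gan_optimal_discriminator_value
    {X : Type*} [Fintype X] (pdata pG : X → ℝ)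
    (hdata_nonneg : ∀ x, 0 ≤ pdata x) (hdata_sum : ∑ x, pdata x = 1)
    (hG_nonneg : ∀ x, 0 ≤ pG x) (hG_sum : ∑ x, pG x = 1)
    (hpos : ∀ x, 0 < pdata x + pG x) :
    (∀ D : X → ℝ, (∀ x, 0 < D x ∧ D x < 1) →
      (∑ x, pdata x * Real.log (D x)) + (∑ x, pG x * Real.log (1 - D x)) ≤
        (∑ x, pdata x * Real.log (pdata x / (pdata x + pG x))) +
          (∑ x, pG x * Real.log (pG x / (pdata x + pG x)))) ∧
    (∑ x, pdata x * Real.log (pdata x / (pdata x + pG x))) +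
        (∑ x, pG x * Real.log (pG x / (pdata x + pG x))) =
      -Real.log 4 +
        2 * ((1 / 2) * (∑ x, pdata x * Real.log (pdata x / ((pdata x + pG x) / 2))) +
             (1 / 2) * (∑ x, pG x * Real.log (pG x / ((pdata x + pG x) / 2)))) := by
  refine ⟨fun D hD => ?_, ?_⟩
  · rw [← sum_add_distrib, ← sum_add_distrib]
    exact sum_le_sum fun x _ =>
      mul_log_add_mul_log_one_sub_le (hdata_nonneg x) (hG_nonneg x) (hpos x) (hD x).1 (hD x).2
  · have hne : ∀ x ∈ (univ : Finset X), pdata x + pG x ≠ 0 := fun x _ => (hpos x).ne'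
    rw [sum_mul_log_div_half_eq _ _ _ hne, sum_mul_log_div_half_eq _ _ _ hne, hdata_sum, hG_sum,
      log_four]
    ring
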